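/- Let q ∈ ℂ with q ≠ 0, let R be a unital associative ℂ-algebra, let K ∈ R be invertible and F ∈ R satisfy K·F = q²·F·K, and let ε₋₁, ε₀, ε₁ ∈ ℂ. Define e₋₁ = ε₋₁·K⁻¹, e₀ = ε₋₁(q³ − q⁻¹)·F + ε₀·1, e₁ = −ε₋₁(q − q⁻¹)²·K·F² − ε₀(q − q⁻¹)·K·F + ε₁·K, and set λ = (1 − q²)ε₀ and ρ = q⁻²(q² + 1)²ε₋₁ε₁ + ε₀². Then the Podleś sphere relations hold in R: (1+q²)(e₋₁e₁ + q⁻²e₁e₋₁) + e₀² = ρ·1, e₀e₋₁ − q²e₋₁e₀ = λ·e₋₁, (1+q²)(e₋₁e₁ − e₁e₋₁) + (1−q²)e₀² = λ·e₀, and e₁e₀ − q²e₀e₁ = λ·e₁. -/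
import Mathlib
set_option maxHeartbeats 2000000

/-- Let `R` be a unital associative ℂ-algebra, `K ∈ R` invertible and `F ∈ R` with
`K·F = q²·F·K`. With `e₋₁ = ε₋₁·K⁻¹`, `e₀ = ε₋₁(q³−q⁻¹)·F + ε₀·1`,
`e₁ = −ε₋₁(q−q⁻¹)²·K·F² − ε₀(q−q⁻¹)·K·F + ε₁·K`, `λ = (1−q²)ε₀` and
`ρ = q⁻²(q²+1)²ε₋₁ε₁ + ε₀²`, the four defining relations of Podleś' quantum sphere hold. -/
theorem stmt19 (q : ℂ) (hq : q ≠ 0) (R : Type*) [Ring R] [Algebra ℂ R]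
    (K : Rˣ) (F : R) (hKF : (K : R) * F = q ^ 2 • (F * (K : R)))
    (em0 e00 e10 : ℂ) :
    let em : R := em0 • ((K⁻¹ : Rˣ) : R)
    let e0 : R := (em0 * (q ^ 3 - q⁻¹)) • F + algebraMap ℂ R e00
    let e1 : R := (-(em0 * (q - q⁻¹) ^ 2)) • ((K : R) * F ^ 2)
      + (-(e00 * (q - q⁻¹))) • ((K : R) * F) + e10 • (K : R)
    let lam : ℂ := (1 - q ^ 2) * e00
    let rho : ℂ := (q ^ 2)⁻¹ * (q ^ 2 + 1) ^ 2 * em0 * e10 + e00 ^ 2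
    (1 + q ^ 2) • (em * e1 + (q ^ 2)⁻¹ • (e1 * em)) + e0 ^ 2 = algebraMap ℂ R rho ∧
    e0 * em - q ^ 2 • (em * e0) = lam • em ∧
    (1 + q ^ 2) • (em * e1 - e1 * em) + (1 - q ^ 2) • e0 ^ 2 = lam • e0 ∧
    e1 * e0 - q ^ 2 • (e0 * e1) = lam • e1 := by
  have hq2 : (q ^ 2 : ℂ) ≠ 0 := pow_ne_zero _ hq
  set A : R := ((K⁻¹ : Rˣ) : R) with hA
  have hFA : F * A = q ^ 2 • (A * F) := by
    have h := congrArg (fun x => A * x * A) hKF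
    simpa [hA, mul_assoc, Units.inv_mul_cancel_left, Units.mul_inv_cancel_left,
      mul_smul_comm, smul_mul_assoc, Units.mul_inv, mul_one] using h
  have hFK : F * (K : R) = (q ^ 2)⁻¹ • ((K : R) * F) := by
    rw [hKF, smul_smul, inv_mul_cancel₀ hq2, one_smul]
  have hFK' : ∀ x : R, F * ((K : R) * x) = (q ^ 2)⁻¹ • ((K : R) * (F * x)) := fun x => by
    rw [← mul_assoc, hFK, smul_mul_assoc, mul_assoc]
  have hFA' : ∀ x : R, F * (A * x) = q ^ 2 • (A * (F * x)) := fun x => by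
    rw [← mul_assoc, hFA, smul_mul_assoc, mul_assoc]
  have hAK' : ∀ x : R, A * ((K : R) * x) = x := fun x => by
    rw [← mul_assoc, hA, Units.inv_mul, one_mul]
  have hKA' : ∀ x : R, (K : R) * (A * x) = x := fun x => by
    rw [← mul_assoc, hA, Units.mul_inv, one_mul]
  have hAK : A * (K : R) = 1 := by rw [hA, Units.inv_mul]
  have hKA : (K : R) * A = 1 := by rw [hA, Units.mul_inv]
  intro em e0 e1 lam rho
  refine ⟨?_, ?_, ?_, ?_⟩
  · simp only [em, e0, e1, lam, rho, Algebra.algebraMap_eq_smul_one, pow_succ, pow_zero,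
      one_mul, mul_one, mul_add, add_mul, smul_mul_assoc, mul_smul_comm, smul_smul,
      mul_assoc, smul_add, hFK', hFA', hAK', hKA', hFK, hFA, hAK, hKA]
    match_scalars
    all_goals
      first
      | ring1
      | (field_simp; ring1)
      | (field_simp; rw [div_add' _ _ _ (by simp [hq]), div_eq_zero_iff]; left; ring1)
      | (ring_nf; field_simp; ring1)
      | (field_simp; ring_nf; field_simp; ring1)
  all_goals
    simp only [em, e0, e1, lam, rho, Algebra.algebraMap_eq_smul_one, pow_succ, pow_zero,
      one_mul, mul_one, mul_add, add_mul, smul_mul_assoc, mul_smul_comm, smul_smul,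
      mul_assoc, smul_add, hFK', hFA', hAK', hKA', hFK, hFA, hAK, hKA]
    match_scalars
    all_goals
      first
      | ring1
      | (field_simp; ring1)
      | (field_simp; rw [div_add' _ _ _ (by simp [hq]), div_eq_zero_iff]; left; ring1)
      | (ring_nf; field_simp; ring1)
      | (field_simp; ring_nf; field_simp; ring1)
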